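/- With M ⪰ 0 symmetric, R ≻ 0 symmetric, γ > 0, γ²I − M ≻ 0, and Δ = I + BR⁻¹BᵀM − γ⁻²M, the saddle-point value of f(u,d) = uᵀRu − γ²dᵀd + (Ax+Bu+d)ᵀM(Ax+Bu+d) equals xᵀ(AᵀMΔ⁻¹A)x; i.e., f(u*,d*) = xᵀ AᵀMΔ⁻¹A x for u* = −R⁻¹BᵀMΔ⁻¹Ax and d* = γ⁻²MΔ⁻¹Ax. -/

import Mathlib

/-!
At the saddle point the state `y := Ax + Bu* + d*` equals `Δ⁻¹Ax`, and substituting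
`u* = -R⁻¹BᵀMy`, `d* = γ⁻²My` collapses the cost to `(Ax)ᵀMy = (Δy)ᵀMy`.
What needs an argument is that `Δ` is invertible: if `Δv = 0`, then
`0 = vᵀMΔv = γ⁻² vᵀM(γ²I - M)v + (Mv)ᵀBR⁻¹Bᵀ(Mv)`, a sum of two nonnegative terms, because
`M` and `γ²I - M` commute. Hence `M(γ²I - M)v = 0`, so `Mv = 0` and finally `v = Δv = 0`.
-/

open Matrix

namespace Matrix

open scoped MatrixOrder Matrix.Norms.L2Operator ComplexOrder

variable {𝕜 n : Type*} [RCLike 𝕜] [Fintype n] [DecidableEq n]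

theorem isUnit_one_add_mul_sub_inv_smul {S M : Matrix n n 𝕜} {c : ℝ} (hS : S.PosSemidef)
    (hM : M.PosSemidef) (hc : 0 < c) (hcM : (c • 1 - M).PosDef) :
    IsUnit (1 + S * M - c⁻¹ • M) := by
  set P := c • 1 - M
  have hMP : Commute M P := ((Commute.one_right M).smul_right c).sub_right (Commute.refl M)
  have hQ₁ : (c⁻¹ • (M * P)).PosSemidef :=
    (hMP.mul_nonneg hM.nonneg hcM.posSemidef.nonneg).posSemidef.smul (inv_nonneg.2 hc.le)
  have hQ₂ : (Mᴴ * S * M).PosSemidef := hS.conjTranspose_mul_mul_same M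
  have hMΔ : M * (1 + S * M - c⁻¹ • M) = c⁻¹ • (M * P) + Mᴴ * S * M := by
    simp only [P, hM.isHermitian.eq, mul_sub, mul_add, mul_one, smul_sub, Matrix.mul_smul,
      smul_smul, inv_mul_cancel₀ hc.ne', one_smul, Matrix.mul_assoc]
    abel
  rw [← mulVec_injective_iff_isUnit, ← coe_mulVecLin, injective_iff_map_eq_zero]
  intro v (hv : (1 + S * M - c⁻¹ • M) *ᵥ v = 0)
  have hquad : star v ⬝ᵥ (c⁻¹ • (M * P)) *ᵥ v + star v ⬝ᵥ (Mᴴ * S * M) *ᵥ v = 0 := by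
    rw [← dotProduct_add, ← add_mulVec, ← hMΔ, ← mulVec_mulVec, hv, mulVec_zero, dotProduct_zero]
  have hQ₁v : (c⁻¹ • (M * P)) *ᵥ v = 0 := (hQ₁.dotProduct_mulVec_zero_iff v).1
    ((add_eq_zero_iff_of_nonneg (hQ₁.dotProduct_mulVec_nonneg v)
      (hQ₂.dotProduct_mulVec_nonneg v)).1 hquad).1
  have hPMv : P *ᵥ (M *ᵥ v) = 0 := by
    rwa [smul_mulVec, smul_eq_zero_iff_right (inv_ne_zero hc.ne'), hMP.eq, ← mulVec_mulVec] at hQ₁v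
  have hMv : M *ᵥ v = 0 := mulVec_injective_of_isUnit hcM.isUnit (hPMv.trans (mulVec_zero P).symm)
  simpa [add_mulVec, sub_mulVec, smul_mulVec, ← mulVec_mulVec, hMv] using hv

end Matrix

section SaddleCost

variable {K n k : Type*} [Field K] [Fintype n] [DecidableEq n] [Fintype k] [DecidableEq k]

theorem saddle_cost_eq {B : Matrix n k K} {R : Matrix k k K} {M : Matrix n n K} {c : K}
    {a y : n → K} {u : k → K} {e : n → K} (hR : IsUnit R.det) (hc : c ≠ 0)
    (hy : (1 + B * R⁻¹ * Bᵀ * M - c⁻¹ • M) *ᵥ y = a)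
    (hu : u = -((R⁻¹ * Bᵀ * M) *ᵥ y)) (he : e = c⁻¹ • (M *ᵥ y)) :
    u ⬝ᵥ R *ᵥ u - c * (e ⬝ᵥ e) + (a + B *ᵥ u + e) ⬝ᵥ M *ᵥ (a + B *ᵥ u + e) = a ⬝ᵥ M *ᵥ y := by
  set z := Bᵀ *ᵥ (M *ᵥ y)
  have hu' : u = -(R⁻¹ *ᵥ z) := by simp only [hu, z, mulVec_mulVec, Matrix.mul_assoc]
  have hSMy : (B * R⁻¹ * Bᵀ * M) *ᵥ y = B *ᵥ (R⁻¹ *ᵥ z) := by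
    simp only [z, mulVec_mulVec, Matrix.mul_assoc]
  have ha : a = y + B *ᵥ (R⁻¹ *ᵥ z) - e := by
    rw [← hy, he, sub_mulVec, add_mulVec, one_mulVec, smul_mulVec, hSMy]
  have hstate : a + B *ᵥ u + e = y := by
    rw [ha, hu', mulVec_neg]; abel
  have hRu : R *ᵥ u = -z := by
    rw [hu', mulVec_neg, mulVec_mulVec, mul_nonsing_inv R hR, one_mulVec]
  have hBz : (B *ᵥ (R⁻¹ *ᵥ z)) ⬝ᵥ M *ᵥ y = (R⁻¹ *ᵥ z) ⬝ᵥ z := by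
    rw [dotProduct_comm, dotProduct_mulVec, ← mulVec_transpose, dotProduct_comm]
  rw [hstate, hRu, ha, hu', he]
  simp only [sub_dotProduct, add_dotProduct, smul_dotProduct, dotProduct_smul, neg_dotProduct,
    dotProduct_neg, neg_neg, smul_eq_mul, hBz]
  field_simp
  ring

end SaddleCost

theorem saddle_point_value (d m : ℕ) (x : Fin d → ℝ)
    (A : Matrix (Fin d) (Fin d) ℝ) (B : Matrix (Fin d) (Fin m) ℝ)
    (R : Matrix (Fin m) (Fin m) ℝ) (hR : R.PosDef)
    (M : Matrix (Fin d) (Fin d) ℝ) (hM : M.PosSemidef)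
    (γ : ℝ) (hγ : 0 < γ)
    (hγM : (γ ^ 2 • (1 : Matrix (Fin d) (Fin d) ℝ) - M).PosDef)
    (Δ : Matrix (Fin d) (Fin d) ℝ)
    (hΔ : Δ = (1 : Matrix (Fin d) (Fin d) ℝ) + B * R⁻¹ * Bᵀ * M - (γ ^ 2)⁻¹ • M)
    (f : (Fin m → ℝ) → (Fin d → ℝ) → ℝ)
    (hf : ∀ u dvec, f u dvec = u ⬝ᵥ R.mulVec u - γ ^ 2 * (dvec ⬝ᵥ dvec) +
      (A.mulVec x + B.mulVec u + dvec) ⬝ᵥ M.mulVec (A.mulVec x + B.mulVec u + dvec))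
    (ustar : Fin m → ℝ) (hustar : ustar = -(R⁻¹ * Bᵀ * M * Δ⁻¹ * A).mulVec x)
    (dstar : Fin d → ℝ) (hdstar : dstar = (γ ^ 2)⁻¹ • (M * Δ⁻¹ * A).mulVec x) :
    f ustar dstar = x ⬝ᵥ (Aᵀ * M * Δ⁻¹ * A).mulVec x := by
  have hS : (B * R⁻¹ * Bᵀ).PosSemidef := by
    simpa only [conjTranspose_eq_transpose_of_trivial] using
      hR.inv.posSemidef.mul_mul_conjTranspose_same B
  have hΔ_det : IsUnit Δ.det := (isUnit_iff_isUnit_det Δ).1 <|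
    hΔ ▸ isUnit_one_add_mul_sub_inv_smul hS hM (by positivity) hγM
  set y := Δ⁻¹ *ᵥ (A *ᵥ x)
  have hy : Δ *ᵥ y = A *ᵥ x := by rw [mulVec_mulVec, mul_nonsing_inv Δ hΔ_det, one_mulVec]
  rw [hf, saddle_cost_eq (isUnit_iff_ne_zero.2 hR.det_pos.ne') (by positivity) (hΔ ▸ hy)
    (by simp only [hustar, y, mulVec_mulVec, Matrix.mul_assoc])
    (by simp only [hdstar, y, mulVec_mulVec, Matrix.mul_assoc])]
  rw [show Aᵀ * M * Δ⁻¹ * A = Aᵀ * (M * Δ⁻¹ * A) by simp only [Matrix.mul_assoc],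
    ← mulVec_mulVec, dotProduct_mulVec x Aᵀ, vecMul_transpose]
  simp only [y, mulVec_mulVec, Matrix.mul_assoc]
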